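/- Let G = (S, E) be any subgraph of the full excitation graph and let t : Ξ(G) → ℝ be finitely supported. Then the cluster operator T = Σ_{α ∈ Ξ(G)} t_α X_α(G) : ℱ → ℱ satisfies T^{N+1} = 0. -/

import Mathlib

/-!
Every edge `(β, α ∨ β)` of the full excitation graph strictly raises the rank: `α ≠ 0` has
as many elements as the reference state, so `rk α > 0`, and ranks add over the disjoint
virtual parts. Hence each `X_α(G)`, and so every linear combination `T` of them, sends a
vector to one supported at rank strictly above some point of its support. Ranks lie in
`[0, N]`, so `T^{N+1}` vanishes.
-/

open Finset

namespace CC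

variable {Λ : Type*} [LinearOrder Λ]

/-- The occupied part of `α` with respect to the reference state `ref`. -/
def occ (ref α : Finset Λ) : Finset Λ := α ∩ ref

/-- The virtual part of `α` with respect to the reference state `ref`. -/
def virt (ref α : Finset Λ) : Finset Λ := α \ ref

/-- The join operation `α ∨ β = (occ α ∩ occ β) ∪ (virt α ∪ virt β)`. -/
def exJoin (ref α β : Finset Λ) : Finset Λ :=
  (occ ref α ∩ occ ref β) ∪ (virt ref α ∪ virt ref β)

/-- The meet operation `α ∧ β = (occ α ∪ occ β) ∪ (virt α ∩ virt β)`. -/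
def exMeet (ref α β : Finset Λ) : Finset Λ :=
  (occ ref α ∪ occ ref β) ∪ (virt ref α ∩ virt ref β)

/-- The rank `rk α = |virt α|`. -/
def rk (ref α : Finset Λ) : ℕ := (virt ref α).card

/-- The sign `σ(α, β)`, given here in terms of the virtual parts `X = virt α`,
`Y = virt β`: the sign of the permutation sorting into increasing order the concatenation
of the increasing enumeration of `Y` followed by that of `X`. -/
noncomputable def sgn (X Y : Finset Λ) : ℤ :=
  ((Equiv.Perm.sign
      (Tuple.sort fun i => (Y.sort (· ≤ ·) ++ X.sort (· ≤ ·)).get i) : ℤˣ) : ℤ)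

/-- The set `S` of states, realized as the subtype of card-`N` finite subsets of `Λ`. -/
abbrev State (Λ : Type*) [LinearOrder Λ] (N : ℕ) := {α : Finset Λ // α.card = N}

/-- The free real vector space `ℱ` on the set of states: finitely supported functions
`S → ℝ`. -/
abbrev FS (Λ : Type*) [LinearOrder Λ] (N : ℕ) := State Λ N →₀ ℝ

/-- The standard basis vector `Φ_β` of `ℱ`. -/
noncomputable def Phi {N : ℕ} (β : State Λ N) : FS Λ N := Finsupp.single β 1

/-- The edge set `E^full` of the full excitation graph, as a set of pairs of states:
`(β, γ) ∈ E^full` iff `γ = α ∨ β` for some `α ∈ S`, `α ≠ ref`, with `(α, β) ∈ 𝓛`,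
i.e. `|occ α ∪ occ β| = N` and `virt α ∩ virt β = ∅`. -/
def EFullS (ref : Finset Λ) (N : ℕ) : Set (State Λ N × State Λ N) :=
  {e | ∃ α : Finset Λ, α.card = N ∧ (occ ref α ∪ occ ref e.1.1).card = N ∧
    virt ref α ∩ virt ref e.1.1 = ∅ ∧ α ≠ ref ∧ e.2.1 = exJoin ref α e.1.1}

/-- The set of excitations `Ξ(G)` of a subgraph `G` with edge set `E`:
those `α ∈ S \ {ref}` which label at least one edge of `E`. -/
def XiSet (ref : Finset Λ) {N : ℕ} (E : Set (State Λ N × State Λ N)) : Set (Finset Λ) :=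
  {α | α.card = N ∧ α ≠ ref ∧ ∃ β γ : State Λ N, γ.1 = exJoin ref α β.1 ∧ (β, γ) ∈ E}

open scoped Classical in
/-- The excitation operator `X_α(G)` on the subgraph with edge set `E`: the linear map
`ℱ → ℱ` with `X_α(G) Φ_β = σ(α, β) Φ_{α ∨ β}` if `(β, α ∨ β) ∈ E` and `0` otherwise. -/
noncomputable def exOp (ref : Finset Λ) {N : ℕ}
    (E : Set (State Λ N × State Λ N)) (α : Finset Λ) :
    FS Λ N →ₗ[ℝ] FS Λ N :=
  Finsupp.lsum ℝ fun β =>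
    if h : ∃ γ : State Λ N, γ.1 = exJoin ref α β.1 ∧ (β, γ) ∈ E then
      ((sgn (virt ref α) (virt ref β.1) : ℤ) : ℝ) • Finsupp.lsingle h.choose
    else 0

/-- A subgraph (given by its edge set `E`) is consistent if `E ⊆ E^full` and whenever
`(β, α ∨ β) ∈ E` for some `β ∈ S`, then `(β', α ∨ β') ∈ E` for every `β' ∈ S` with
`(β', α ∨ β') ∈ E^full`. -/
def Consistent (ref : Finset Λ) {N : ℕ} (E : Set (State Λ N × State Λ N)) : Prop :=
  E ⊆ EFullS ref N ∧
  ∀ (α : Finset Λ) (β γ β' γ' : State Λ N),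
    γ.1 = exJoin ref α β.1 → (β, γ) ∈ E →
    γ'.1 = exJoin ref α β'.1 → (β', γ') ∈ EFullS ref N → (β', γ') ∈ E

section RankRaising

variable {σ R : Type*} [CommSemiring R]

def rankRaising (r : σ → ℕ) : Submodule R (Module.End R (σ →₀ R)) where
  carrier := {T | ∀ (f : σ →₀ R) (γ : σ), γ ∈ (T f).support → ∃ β ∈ f.support, r β < r γ}
  zero_mem' := by simp
  add_mem' {S T} hS hT f γ hγ := by
    classical
    rcases Finset.mem_union.1 (Finsupp.support_add hγ) with hγ | hγ
    exacts [hS f γ hγ, hT f γ hγ]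
  smul_mem' c T hT f γ hγ := hT f γ (Finsupp.support_smul hγ)

theorem mem_rankRaising {r : σ → ℕ} {T : Module.End R (σ →₀ R)} :
    T ∈ rankRaising r ↔
      ∀ (f : σ →₀ R) (γ : σ), γ ∈ (T f).support → ∃ β ∈ f.support, r β < r γ :=
  Iff.rfl

theorem exists_mem_support_add_le_of_mem_support_pow {r : σ → ℕ} {T : Module.End R (σ →₀ R)}
    (hT : T ∈ rankRaising r) (m : ℕ) (f : σ →₀ R) (γ : σ) (hγ : γ ∈ ((T ^ m) f).support) :
    ∃ β ∈ f.support, r β + m ≤ r γ := by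
  induction m generalizing f with
  | zero => exact ⟨γ, by simpa using hγ, le_rfl⟩
  | succ m ih =>
    rw [pow_succ, Module.End.mul_apply] at hγ
    obtain ⟨β, hβ, hβγ⟩ := ih (T f) hγ
    obtain ⟨β', hβ', hβ'β⟩ := mem_rankRaising.1 hT f β hβ
    exact ⟨β', hβ', by omega⟩

theorem pow_eq_zero_of_mem_rankRaising {r : σ → ℕ} {N : ℕ} (hr : ∀ s, r s ≤ N)
    {T : Module.End R (σ →₀ R)} (hT : T ∈ rankRaising r) : T ^ (N + 1) = 0 := by
  refine LinearMap.ext fun f => Finsupp.ext fun γ => ?_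
  by_contra hγ
  obtain ⟨β, -, hβγ⟩ :=
    exists_mem_support_add_le_of_mem_support_pow hT (N + 1) f γ (Finsupp.mem_support_iff.2 hγ)
  have := hr γ
  omega

end RankRaising

theorem virt_exJoin (ref α β : Finset Λ) :
    virt ref (exJoin ref α β) = virt ref α ∪ virt ref β := by
  ext x
  simp only [exJoin, occ, virt, Finset.mem_sdiff, Finset.mem_union, Finset.mem_inter]
  tauto

theorem rk_exJoin {ref α β : Finset Λ} (h : Disjoint (virt ref α) (virt ref β)) :
    rk ref (exJoin ref α β) = rk ref α + rk ref β := by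
  rw [rk, virt_exJoin, Finset.card_union_of_disjoint h, rk, rk]

theorem rk_le_card (ref α : Finset Λ) : rk ref α ≤ α.card :=
  Finset.card_le_card Finset.sdiff_subset

theorem rk_pos {ref α : Finset Λ} (hcard : ref.card ≤ α.card) (hne : α ≠ ref) :
    0 < rk ref α := by
  refine Finset.card_pos.2 (Finset.nonempty_iff_ne_empty.2 fun h => hne ?_)
  exact Finset.eq_of_subset_of_card_le (Finset.sdiff_eq_empty_iff_subset.1 h) hcard

theorem rk_lt_of_mem_EFullS {ref : Finset Λ} {N : ℕ} (href : ref.card = N)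
    {β γ : State Λ N} (h : (β, γ) ∈ EFullS ref N) : rk ref β.1 < rk ref γ.1 := by
  obtain ⟨α, hα, -, hdisj, hne, hγ⟩ := h
  have hrk : rk ref γ.1 = rk ref α + rk ref β.1 := by
    rw [hγ, rk_exJoin (Finset.disjoint_iff_inter_eq_empty.2 hdisj)]
  have := rk_pos (href.trans hα.symm).le hne
  omega

theorem exists_edge_of_mem_support_exOp {ref : Finset Λ} {N : ℕ}
    {E : Set (State Λ N × State Λ N)} {α : Finset Λ} {f : FS Λ N} {γ : State Λ N}
    (hγ : γ ∈ (exOp ref E α f).support) : ∃ β ∈ f.support, (β, γ) ∈ E := by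
  rw [exOp, Finsupp.lsum_apply] at hγ
  obtain ⟨β, hβ, hγβ⟩ := Finset.mem_biUnion.1 (Finsupp.support_sum hγ)
  refine ⟨β, hβ, ?_⟩
  split_ifs at hγβ with h
  · simp only [LinearMap.smul_apply, Finsupp.lsingle_apply, Finsupp.smul_single] at hγβ
    rw [Finset.mem_singleton.1 (Finsupp.support_single_subset hγβ)]
    exact h.choose_spec.2
  · simp at hγβ

theorem exOp_mem_rankRaising {ref : Finset Λ} {N : ℕ} (href : ref.card = N)
    {E : Set (State Λ N × State Λ N)} (hE : E ⊆ EFullS ref N) (α : Finset Λ) :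
    exOp ref E α ∈ rankRaising (fun β : State Λ N => rk ref β.1) := by
  refine mem_rankRaising.2 fun f γ hγ => ?_
  obtain ⟨β, hβ, hβγ⟩ := exists_edge_of_mem_support_exOp hγ
  exact ⟨β, hβ, rk_lt_of_mem_EFullS href (hE hβγ)⟩

theorem clusterOp_nilpotent_general (ref : Finset Λ) (N : ℕ)
    (href : ref.card = N)
    (E : Set (State Λ N × State Λ N)) (hE : E ⊆ EFullS ref N)
    (t : Finset Λ →₀ ℝ) :
    (t.sum fun α c => c • exOp ref E α : Module.End ℝ (FS Λ N)) ^ (N + 1) = 0 := by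
  refine pow_eq_zero_of_mem_rankRaising (fun β => (rk_le_card ref β.1).trans_eq β.2) ?_
  exact Submodule.finsuppSum_mem _ _ _ _ fun α _ =>
    Submodule.smul_mem _ _ (exOp_mem_rankRaising href hE α)

/-- For any subgraph `G = (S, E)` of the full excitation graph and any
finitely supported `t : Ξ(G) → ℝ`, the cluster operator `T = Σ_{α ∈ Ξ(G)} t_α X_α(G)`
satisfies `T^{N+1} = 0`. -/
theorem clusterOp_nilpotent (ref : Finset Λ) (N : ℕ)
    (hN : 1 ≤ N) (hord : ∀ x ∈ ref, ∀ y ∉ ref, x < y) (href : ref.card = N)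
    (E : Set (State Λ N × State Λ N)) (hE : E ⊆ EFullS ref N)
    (t : Finset Λ →₀ ℝ) (ht : ∀ α ∈ t.support, α ∈ XiSet ref E) :
    (t.sum fun α c => c • exOp ref E α : Module.End ℝ (FS Λ N)) ^ (N + 1) = 0 :=
  clusterOp_nilpotent_general ref N href E hE t

end CC
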